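/- Let 𝔾 be the Bruhat graph of a Weyl group W and suppose ε and ε' are two functions assigning ±1 to each edge of 𝔾 such that for every square (a configuration w → w'_1 → w'', w → w'_2 → w'' with w'_1 ≠ w'_2) the product of the values on its four edges equals −1. Then there exists a function γ : W → {±1} with γ(e) = 1 such that ε(w', w) = γ(w')⁻¹ ε'(w', w) γ(w) for every edge w' → w. -/

import Mathlib

/-!
The product `φ = ε ε'` is a `±1`-valued function on the edges of the Bruhat graph whose product
around every square is `+1`, so it suffices to show that such a "flat" `φ` is a coboundary.
Take `γ w` to be the product of `φ` along the path from `1` to `w` that repeatedly strips off a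
chosen right descent `sᵢ`. For an edge `w' → w` with `w' ≠ w sᵢ`, the lifting property says that
`sᵢ` is a right descent of `w'` as well, so `w' sᵢ → w', w' sᵢ → w sᵢ, w sᵢ → w, w' → w` is a
square; flatness and induction on length give `γ w = γ w' · φ w' w`.

The lifting property is derived from the strong exchange condition, in the form of the sign
representation of `W` on `W × ℤˣ`: `sᵢ` acts by `(t, ε) ↦ (sᵢ t sᵢ, ε · (-1)^[t = sᵢ])`, and the
sign picked up by `t` under `w` is `-1` exactly when the reflection `t` is a right inversion of `w`.
-/

/-- Edges of the Bruhat graph: `w' → w` when `w = w'·t` for a reflection `t` and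
`ℓ(w) = ℓ(w') + 1`. -/
def BruhatEdge {B W : Type} [Group W] {M : CoxeterMatrix B} (cs : CoxeterSystem M W)
    (w' w : W) : Prop :=
  (∃ t : W, cs.IsReflection t ∧ w = w' * t) ∧ cs.length w = cs.length w' + 1

namespace CoxeterSystem

variable {B W : Type*} [Group W] {M : CoxeterMatrix B} (cs : CoxeterSystem M W)

open Classical

noncomputable def signPerm (i : B) : Equiv.Perm (W × ℤˣ) :=
  Function.Involutive.toPerm
    (fun p => (cs.simple i * p.1 * cs.simple i, p.2 * if p.1 = cs.simple i then -1 else 1))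
    (by
      rintro ⟨t, ε⟩
      ext
      · simp [mul_assoc]
      · by_cases h : t = cs.simple i
        · simp [h]
        · have h' : cs.simple i * t * cs.simple i ≠ cs.simple i := fun h' =>
            h (by simpa [mul_assoc] using congrArg (cs.simple i * · * cs.simple i) h')
          simp only [if_neg h, if_neg h', mul_one])

lemma signPerm_apply (i : B) (t : W) (ε : ℤˣ) :
    cs.signPerm i (t, ε) =
      (cs.simple i * t * cs.simple i, ε * if t = cs.simple i then -1 else 1) :=
  rfl

lemma signPerm_mul_signPerm_pow_apply (i j : B) (n : ℕ) (t : W) (ε : ℤˣ) :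
    ((cs.signPerm i * cs.signPerm j) ^ n) (t, ε) =
      ((cs.simple i * cs.simple j) ^ n * t * ((cs.simple i * cs.simple j) ^ n)⁻¹,
        ε * ∏ a ∈ Finset.range (2 * n),
          if t = cs.simple j * (cs.simple i * cs.simple j) ^ a then -1 else 1) := by
  set q := cs.simple i * cs.simple j
  have hconj (n : ℕ) : (q ^ n)⁻¹ * cs.simple j * q ^ n = cs.simple j * q ^ (2 * n) := by
    have : cs.simple j * q * (cs.simple j)⁻¹ = q⁻¹ := by simp [q, mul_assoc]
    rw [← inv_pow, ← this, conj_pow, two_mul, pow_add]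
    simp [mul_assoc]
  have conj_eq_iff (a t x : W) : a * t * a⁻¹ = x ↔ t = a⁻¹ * x * a := by
    constructor <;> rintro rfl <;> group
  induction n generalizing t ε with
  | zero => simp
  | succ n ih =>
    have hfirst : q ^ n * t * (q ^ n)⁻¹ = cs.simple j ↔ t = cs.simple j * q ^ (2 * n) := by
      rw [conj_eq_iff, hconj]
    have hsecond : cs.simple j * (q ^ n * t * (q ^ n)⁻¹) * cs.simple j = cs.simple i ↔
        t = cs.simple j * q ^ (2 * n + 1) := by
      have hq : (cs.simple j * q ^ n)⁻¹ * cs.simple i * (cs.simple j * q ^ n) =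
          (q ^ n)⁻¹ * cs.simple j * q ^ n * q := by
        simp only [q, mul_inv_rev, inv_simple, ← (Commute.self_pow q n).eq, mul_assoc]
      rw [pow_succ, ← mul_assoc _ (q ^ (2 * n)), ← hconj, ← hq, ← conj_eq_iff]
      simp only [mul_inv_rev, inv_simple, mul_assoc]
    rw [pow_succ', Equiv.Perm.mul_apply, ih, Equiv.Perm.mul_apply, signPerm_apply, signPerm_apply,
      Prod.ext_iff]
    constructor
    · simp [q, pow_succ', mul_assoc]
    · rw [show 2 * (n + 1) = 2 * n + 1 + 1 by ring, Finset.prod_range_succ, Finset.prod_range_succ,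
        hfirst, hsecond]
      simp only [mul_assoc]

lemma isLiftable_signPerm : M.IsLiftable cs.signPerm := by
  intro i j
  have hq : (cs.simple i * cs.simple j) ^ M i j = 1 := cs.simple_mul_simple_pow i j
  have hperiod (a : ℕ) : (cs.simple i * cs.simple j) ^ (M i j + a) =
      (cs.simple i * cs.simple j) ^ a := by
    rw [pow_add, hq, one_mul]
  ext ⟨t, ε⟩ : 1
  rw [signPerm_mul_signPerm_pow_apply, two_mul, Finset.prod_range_add]
  simp only [hperiod, hq, Int.units_mul_self, one_mul, mul_one, inv_one, Equiv.Perm.one_apply]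

noncomputable def signRep : W →* Equiv.Perm (W × ℤˣ) :=
  cs.lift ⟨cs.signPerm, cs.isLiftable_signPerm⟩

lemma signRep_simple (i : B) : cs.signRep (cs.simple i) = cs.signPerm i :=
  cs.lift_apply_simple cs.isLiftable_signPerm i

noncomputable def inversionSign (w t : W) : ℤˣ := (cs.signRep w (t, 1)).2

lemma signRep_apply (w t : W) (ε : ℤˣ) :
    cs.signRep w (t, ε) = (w * t * w⁻¹, ε * cs.inversionSign w t) := by
  induction w using cs.simple_induction_left generalizing t ε with
  | one => simp [inversionSign]
  | mul_simple_left w i ih =>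
    have hsign : cs.inversionSign (cs.simple i * w) t =
        cs.inversionSign w t * if w * t * w⁻¹ = cs.simple i then -1 else 1 := by
      rw [inversionSign, map_mul, Equiv.Perm.mul_apply, ih, signRep_simple, signPerm_apply,
        one_mul]
    rw [map_mul, Equiv.Perm.mul_apply, ih, signRep_simple, signPerm_apply, hsign]
    simp [mul_assoc]

@[simp]
lemma inversionSign_one (t : W) : cs.inversionSign 1 t = 1 := by
  simp [inversionSign]

lemma inversionSign_mul (w v t : W) :
    cs.inversionSign (w * v) t = cs.inversionSign v t * cs.inversionSign w (v * t * v⁻¹) := by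
  rw [inversionSign, map_mul, Equiv.Perm.mul_apply, signRep_apply cs v t, one_mul, signRep_apply]

lemma inversionSign_simple (i : B) (t : W) :
    cs.inversionSign (cs.simple i) t = if t = cs.simple i then -1 else 1 := by
  rw [inversionSign, signRep_simple, signPerm_apply, one_mul]

lemma inversionSign_self {t : W} (ht : cs.IsReflection t) : cs.inversionSign t t = -1 := by
  obtain ⟨w, i, rfl⟩ := ht
  have hconj : w⁻¹ * (w * cs.simple i * w⁻¹) * w⁻¹⁻¹ = cs.simple i := by group
  have hinv := cs.inversionSign_mul w w⁻¹ (w * cs.simple i * w⁻¹)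
  rw [mul_inv_cancel, inversionSign_one, hconj] at hinv
  rw [inversionSign_mul, hconj, inversionSign_mul, mul_inv_cancel_right, inversionSign_simple,
    if_pos rfl, neg_one_mul, mul_neg, ← hinv]

lemma inversionSign_mul_self {t : W} (ht : cs.IsReflection t) (w : W) :
    cs.inversionSign (w * t) t = -cs.inversionSign w t := by
  rw [inversionSign_mul, inversionSign_self cs ht, mul_inv_cancel_right, neg_one_mul]

lemma mem_rightInvSeq_of_inversionSign_eq_neg_one {ω : List B} {t : W}
    (h : cs.inversionSign (cs.wordProd ω) t = -1) : t ∈ cs.rightInvSeq ω := by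
  induction ω with
  | nil => simp at h
  | cons i ω ih =>
    rw [wordProd_cons, inversionSign_mul, inversionSign_simple] at h
    rw [rightInvSeq, List.mem_cons]
    by_cases hc : cs.wordProd ω * t * (cs.wordProd ω)⁻¹ = cs.simple i
    · left
      rw [← hc]
      group
    · rw [if_neg hc, mul_one] at h
      exact Or.inr (ih h)

lemma isRightInversion_of_inversionSign_eq_neg_one {w t : W} (h : cs.inversionSign w t = -1) :
    cs.IsRightInversion w t := by
  obtain ⟨ω, hω, rfl⟩ := cs.exists_isReduced w
  exact cs.isRightInversion_of_mem_rightInvSeq hω (cs.mem_rightInvSeq_of_inversionSign_eq_neg_one h)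

lemma isRightInversion_iff_inversionSign_eq_neg_one {w t : W} (ht : cs.IsReflection t) :
    cs.IsRightInversion w t ↔ cs.inversionSign w t = -1 := by
  refine ⟨fun h => (Int.units_eq_one_or _).resolve_left fun h1 => ?_,
    cs.isRightInversion_of_inversionSign_eq_neg_one⟩
  refine ht.not_isRightInversion_mul_left_iff.mpr h
    (cs.isRightInversion_of_inversionSign_eq_neg_one ?_)
  rw [inversionSign_mul_self cs ht, h1]

end CoxeterSystem

namespace CoxeterSystem

variable {B W : Type} [Group W] {M : CoxeterMatrix B} (cs : CoxeterSystem M W)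

lemma isRightDescent_of_bruhatEdge {w' w : W} {i : B} (he : BruhatEdge cs w' w)
    (hw : cs.IsRightDescent w i) (hne : w' ≠ w * cs.simple i) : cs.IsRightDescent w' i := by
  obtain ⟨⟨t, ht, rfl⟩, hlen⟩ := he
  have hts : t ≠ cs.simple i := by
    rintro rfl
    exact hne (by simp [mul_assoc])
  have hsign : cs.inversionSign (w' * t) t = -1 := by
    rw [← isRightInversion_iff_inversionSign_eq_neg_one cs ht]
    exact ⟨ht, by rw [mul_assoc, ht.mul_self, mul_one]; omega⟩
  -- since `t ≠ sᵢ`, conjugating by `sᵢ` keeps the sign: `sᵢ t sᵢ` is a right inversion of `w sᵢ`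
  have hconj : cs.IsRightInversion (w' * t * cs.simple i) (cs.simple i * t * (cs.simple i)⁻¹) := by
    apply cs.isRightInversion_of_inversionSign_eq_neg_one
    have := cs.inversionSign_mul (w' * t * cs.simple i) (cs.simple i) t
    rwa [simple_mul_simple_cancel_right, hsign, inversionSign_simple, if_neg hts, one_mul,
      eq_comm] at this
  have hprod : w' * t * cs.simple i * (cs.simple i * t * (cs.simple i)⁻¹) = w' * cs.simple i := by
    simp [mul_assoc, ← mul_assoc t t, ht.mul_self]
  have hlt := hconj.2
  rw [hprod] at hlt
  have := cs.isRightDescent_iff.mp hw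
  unfold IsRightDescent
  omega

lemma bruhatEdge_mul_simple {w : W} {i : B} (hw : cs.IsRightDescent w i) :
    BruhatEdge cs (w * cs.simple i) w :=
  ⟨⟨cs.simple i, cs.isReflection_simple i, by simp [mul_assoc]⟩,
    (cs.isRightDescent_iff.mp hw).symm⟩

lemma _root_.BruhatEdge.mul_simple {w' w : W} {i : B} (he : BruhatEdge cs w' w)
    (hw' : cs.IsRightDescent w' i) (hw : cs.IsRightDescent w i) :
    BruhatEdge cs (w' * cs.simple i) (w * cs.simple i) := by
  obtain ⟨⟨t, ht, rfl⟩, hlen⟩ := he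
  refine ⟨⟨cs.simple i * t * (cs.simple i)⁻¹, ht.conj _, by simp [mul_assoc]⟩, ?_⟩
  have := cs.isRightDescent_iff.mp hw
  have := cs.isRightDescent_iff.mp hw'
  omega

open Classical in
noncomputable def pathProduct {G : Type*} [Monoid G] (φ : W → W → G) (w : W) : G :=
  if h : w = 1 then 1 else
    letI i := (cs.exists_rightDescent_of_ne_one h).choose
    pathProduct φ (w * cs.simple i) * φ (w * cs.simple i) w
termination_by cs.length w
decreasing_by exact (cs.exists_rightDescent_of_ne_one h).choose_spec

@[simp]
lemma pathProduct_one {G : Type*} [Monoid G] (φ : W → W → G) : pathProduct cs φ 1 = 1 := by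
  rw [pathProduct, dif_pos rfl]

lemma exists_pathProduct_eq {G : Type*} [Monoid G] (φ : W → W → G) {w : W} (hw : w ≠ 1) :
    ∃ i, cs.IsRightDescent w i ∧
      pathProduct cs φ w = pathProduct cs φ (w * cs.simple i) * φ (w * cs.simple i) w := by
  rw [pathProduct, dif_neg hw]
  exact ⟨_, (cs.exists_rightDescent_of_ne_one hw).choose_spec, rfl⟩

lemma pathProduct_eq_mul_of_bruhatEdge {G : Type*} [Monoid G] {φ : W → W → G}
    (hflat : ∀ u w1 w2 w : W, BruhatEdge cs u w1 → BruhatEdge cs w1 w →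
      BruhatEdge cs u w2 → BruhatEdge cs w2 w → w1 ≠ w2 → φ u w1 * φ w1 w = φ u w2 * φ w2 w)
    {w' w : W} (he : BruhatEdge cs w' w) :
    pathProduct cs φ w = pathProduct cs φ w' * φ w' w := by
  induction hn : cs.length w using Nat.strong_induction_on generalizing w' w with
  | _ n ih =>
    have hw : w ≠ 1 := by
      rintro rfl
      simpa using he.2
    obtain ⟨i, hdesc, hpath⟩ := exists_pathProduct_eq cs φ hw
    rw [hpath]
    by_cases hne : w' = w * cs.simple i
    · rw [hne]
    -- otherwise `w'` also has right descent `sᵢ`, and `w' sᵢ, w', w sᵢ, w` form a square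
    have hdesc' := isRightDescent_of_bruhatEdge cs he hdesc hne
    have e1 := bruhatEdge_mul_simple cs hdesc'
    have e2 := he.mul_simple cs hdesc' hdesc
    have e3 := bruhatEdge_mul_simple cs hdesc
    have hlen := he.2
    rw [ih _ (hn ▸ hdesc) e2 rfl, ih _ (by omega) e1 rfl, mul_assoc, mul_assoc,
      hflat _ _ _ _ e2 e3 e1 he (Ne.symm hne)]

end CoxeterSystem

theorem stmt_9_general {B W : Type} [Group W] {M : CoxeterMatrix B} (cs : CoxeterSystem M W)
    (ε ε' : W → W → ℤˣ)
    (hsq : ∀ w w1 w2 w'' : W, BruhatEdge cs w w1 → BruhatEdge cs w1 w'' →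
      BruhatEdge cs w w2 → BruhatEdge cs w2 w'' → w1 ≠ w2 →
      ε w w1 * ε w1 w'' * ε w w2 * ε w2 w'' = -1)
    (hsq' : ∀ w w1 w2 w'' : W, BruhatEdge cs w w1 → BruhatEdge cs w1 w'' →
      BruhatEdge cs w w2 → BruhatEdge cs w2 w'' → w1 ≠ w2 →
      ε' w w1 * ε' w1 w'' * ε' w w2 * ε' w2 w'' = -1) :
    ∃ γ : W → ℤˣ, γ 1 = 1 ∧
      ∀ w' w : W, BruhatEdge cs w' w → ε w' w = (γ w')⁻¹ * ε' w' w * γ w := by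
  have hflat : ∀ u w1 w2 w : W, BruhatEdge cs u w1 → BruhatEdge cs w1 w →
      BruhatEdge cs u w2 → BruhatEdge cs w2 w → w1 ≠ w2 →
      (ε u w1 * ε' u w1) * (ε w1 w * ε' w1 w) = (ε u w2 * ε' u w2) * (ε w2 w * ε' w2 w) := by
    intro u w1 w2 w e1 e2 e3 e4 hne
    rw [← mul_inv_eq_one, Int.units_inv_eq_self]
    calc _ = (ε u w1 * ε w1 w * ε u w2 * ε w2 w) * (ε' u w1 * ε' w1 w * ε' u w2 * ε' w2 w) := by
          ac_rfl
      _ = 1 := by rw [hsq u w1 w2 w e1 e2 e3 e4 hne, hsq' u w1 w2 w e1 e2 e3 e4 hne]; rfl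
  refine ⟨cs.pathProduct fun a b => ε a b * ε' a b, cs.pathProduct_one _, fun w' w he => ?_⟩
  rw [cs.pathProduct_eq_mul_of_bruhatEdge hflat he]
  simp [mul_assoc, mul_left_comm, Int.units_mul_self]

/-- Essential uniqueness of a BGG sign assignment: if `ε` and `ε'` both assign `±1` to each
edge of the Bruhat graph so that the product over the four edges of every square is `-1`,
and the BGG structural properties hold, then `ε` and `ε'` differ by a coboundary
`ε(w',w) = γ(w')⁻¹ ε'(w',w) γ(w)` with `γ : W → {±1}`, `γ(e) = 1`. -/
theorem stmt_9 {B W : Type} [Group W] {M : CoxeterMatrix B} (cs : CoxeterSystem M W)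
    (ε ε' : W → W → ℤˣ)
    (hsq : ∀ w w1 w2 w'' : W, BruhatEdge cs w w1 → BruhatEdge cs w1 w'' →
      BruhatEdge cs w w2 → BruhatEdge cs w2 w'' → w1 ≠ w2 →
      ε w w1 * ε w1 w'' * ε w w2 * ε w2 w'' = -1)
    (hsq' : ∀ w w1 w2 w'' : W, BruhatEdge cs w w1 → BruhatEdge cs w1 w'' →
      BruhatEdge cs w w2 → BruhatEdge cs w2 w'' → w1 ≠ w2 →
      ε' w w1 * ε' w1 w'' * ε' w w2 * ε' w2 w'' = -1)
    (hdiamond : ∀ w w'' : W, Relation.ReflTransGen (BruhatEdge cs) w w'' →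
      cs.length w'' = cs.length w + 2 →
      {w' : W | BruhatEdge cs w w' ∧ BruhatEdge cs w' w''}.ncard = 0 ∨
      {w' : W | BruhatEdge cs w w' ∧ BruhatEdge cs w' w''}.ncard = 2)
    (hsimple : ∀ w : W, w ≠ 1 → ∃ w' : W, ∃ i : B,
      BruhatEdge cs w' w ∧ w = w' * cs.simple i) :
    ∃ γ : W → ℤˣ, γ 1 = 1 ∧
      ∀ w' w : W, BruhatEdge cs w' w → ε w' w = (γ w')⁻¹ * ε' w' w * γ w :=
  stmt_9_general cs ε ε' hsq hsq'
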